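/- With c_n(α,ρ) = √(1-ρ)·Φ⁻¹(1-1/n) - √ρ·Φ⁻¹(α), the limit of the FWER 1 - E_Z[Φ^{n_0}((c_n(α,ρ) + √ρ Z)/√(1-ρ))] equals α whenever n_0/n → p_0 for some p_0 > 0. -/

import Mathlib

open Filter MeasureTheory ProbabilityTheory Set

noncomputable def Phi (x : ℝ) : ℝ :=
  ∫ t in Set.Iic x, Real.exp (-t ^ 2 / 2) / Real.sqrt (2 * Real.pi)

noncomputable def phi (t : ℝ) : ℝ := Real.exp (-t ^ 2 / 2) / Real.sqrt (2 * Real.pi)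

lemma phi_eq : phi = gaussianPDFReal 0 1 := by
  ext x
  simp only [phi, gaussianPDFReal_def, NNReal.coe_one, mul_one, sub_zero]
  rw [div_eq_inv_mul]

lemma phi_pos (t : ℝ) : 0 < phi t := by rw [phi_eq]; exact gaussianPDFReal_pos 0 1 t one_ne_zero

lemma phi_integrable : Integrable phi := by rw [phi_eq]; exact integrable_gaussianPDFReal 0 1

lemma phi_integral_one : ∫ t, phi t = 1 := by
  rw [phi_eq]; exact integral_gaussianPDFReal_eq_one 0 one_ne_zero

lemma Phi_def (x : ℝ) : Phi x = ∫ t in Set.Iic x, phi t := rfl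

noncomputable def Tail (x : ℝ) : ℝ := ∫ t in Set.Ioi x, phi t

lemma Phi_add_Tail (x : ℝ) : Phi x + Tail x = 1 := by
  rw [Phi_def, Tail, intervalIntegral.integral_Iic_add_Ioi phi_integrable.integrableOn
    phi_integrable.integrableOn, phi_integral_one]

lemma Phi_mono : Monotone Phi := fun a b hab => by
  rw [Phi_def, Phi_def]
  exact setIntegral_mono_set phi_integrable.integrableOn
    (ae_of_all _ fun t => (phi_pos t).le) (HasSubset.Subset.eventuallyLE (Iic_subset_Iic.2 hab))

lemma Phi_nonneg (x : ℝ) : 0 ≤ Phi x := by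
  rw [Phi_def]; exact setIntegral_nonneg measurableSet_Iic fun t _ => (phi_pos t).le

lemma Tail_nonneg (x : ℝ) : 0 ≤ Tail x :=
  setIntegral_nonneg measurableSet_Ioi fun t _ => (phi_pos t).le

lemma Phi_le_one (x : ℝ) : Phi x ≤ 1 := by
  have := Phi_add_Tail x; nlinarith [Tail_nonneg x]

lemma Tail_pos (x : ℝ) : 0 < Tail x := by
  have h1 : (0:ℝ) < ∫ t in x..(x+1), phi t :=
    intervalIntegral.intervalIntegral_pos_of_pos
      (phi_integrable.intervalIntegrable) (fun t => phi_pos t) (by linarith)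
  have h2 : ∫ t in x..(x+1), phi t = ∫ t in Set.Ioc x (x+1), phi t :=
    intervalIntegral.integral_of_le (by linarith)
  have h3 : ∫ t in Set.Ioc x (x+1), phi t ≤ Tail x :=
    setIntegral_mono_set phi_integrable.integrableOn
      (ae_of_all _ fun t => (phi_pos t).le)
      (HasSubset.Subset.eventuallyLE Ioc_subset_Ioi_self)
  linarith

lemma Phi_lt_one (x : ℝ) : Phi x < 1 := by
  have := Phi_add_Tail x; have := Tail_pos x; linarith

lemma Phi_tendsto_atTop : Tendsto Phi atTop (nhds 1) := by
  have := (aecover_Iic (tendsto_id (α := ℝ) (x := atTop))).integral_tendsto_of_countably_generated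
    (μ := volume) (f := phi) phi_integrable
  rwa [phi_integral_one] at this

lemma Tail_tendsto_atBot : Tendsto Tail atBot (nhds 1) := by
  have := (aecover_Ioi (tendsto_id (α := ℝ) (x := atBot))).integral_tendsto_of_countably_generated
    (μ := volume) (f := phi) phi_integrable
  rwa [phi_integral_one] at this

lemma Phi_tendsto_atBot : Tendsto Phi atBot (nhds 0) := by
  have h : Phi = fun x => 1 - Tail x := by
    ext x; have := Phi_add_Tail x; linarith
  rw [h]
  have := tendsto_const_nhds (x := (1:ℝ)) (f := atBot (α := ℝ)) |>.sub Tail_tendsto_atBot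
  simpa using this

lemma Phi_continuous : Continuous Phi := by
  have h : ∀ x : ℝ, Phi x = Phi 0 + ∫ t in (0:ℝ)..x, phi t := by
    intro x
    rw [← intervalIntegral.integral_Iic_sub_Iic phi_integrable.integrableOn
      phi_integrable.integrableOn, Phi_def, Phi_def]
    ring
  have : Continuous fun x : ℝ => Phi 0 + ∫ t in (0:ℝ)..x, phi t := by
    exact continuous_const.add (intervalIntegral.continuous_primitive
      (fun a b => phi_integrable.intervalIntegrable) 0)
  exact this.congr fun x => (h x).symm

noncomputable def PhiInv (p : ℝ) : ℝ := Function.invFun Phi p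

lemma Phi_surj {p : ℝ} (hp : p ∈ Set.Ioo (0:ℝ) 1) : ∃ x, Phi x = p := by
  obtain ⟨a, ha⟩ := (Phi_tendsto_atBot.eventually (eventually_lt_nhds hp.1)).exists
  obtain ⟨b, hb⟩ := (Phi_tendsto_atTop.eventually (eventually_gt_nhds hp.2)).exists
  have hab : a ≤ b := by
    by_contra h
    exact absurd (Phi_mono (le_of_not_ge h)) (by linarith)
  obtain ⟨x, _, hx⟩ := intermediate_value_Icc hab Phi_continuous.continuousOn
    ⟨ha.le, hb.le⟩
  exact ⟨x, hx⟩

lemma Phi_PhiInv {p : ℝ} (hp : p ∈ Set.Ioo (0:ℝ) 1) : Phi (PhiInv p) = p :=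
  Function.invFun_eq (Phi_surj hp)

lemma lt_PhiInv {M p : ℝ} (hp : p ∈ Set.Ioo (0:ℝ) 1) (h : Phi M < p) : M < PhiInv p := by
  by_contra hc
  exact absurd (Phi_mono (le_of_not_gt hc)) (by rw [Phi_PhiInv hp]; linarith)

lemma Tail_shift (b s : ℝ) :
    Tail (b + s) = ∫ x in Set.Ioi b, phi (x + s) := by
  have hmp : MeasurePreserving (fun x : ℝ => x + s) volume volume :=
    measurePreserving_add_right volume s
  have hemb : MeasurableEmbedding (fun x : ℝ => x + s) :=
    (Homeomorph.addRight s).measurableEmbedding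
  have hpre : (fun x : ℝ => x + s) ⁻¹' Set.Ioi (b + s) = Set.Ioi b := by
    ext x; simp
  rw [Tail, ← hmp.setIntegral_preimage_emb hemb phi (Set.Ioi (b + s)), hpre]

lemma phi_shift (x s : ℝ) : phi (x + s) = phi x * Real.exp (-(x*s) - s^2/2) := by
  unfold phi
  rw [div_mul_eq_mul_div, ← Real.exp_add]
  ring_nf

lemma Tail_shift_le {b s : ℝ} (hs : 0 ≤ s) :
    Tail (b + s) ≤ Real.exp (-(b*s) - s^2/2) * Tail b := by
  rw [Tail_shift, Tail, ← integral_const_mul]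
  refine setIntegral_mono_on ?_ ?_ measurableSet_Ioi ?_
  · exact (phi_integrable.comp_add_right s).integrableOn
  · exact (phi_integrable.const_mul _).integrableOn
  · intro x hx
    rw [phi_shift, mul_comm]
    refine mul_le_mul_of_nonneg_right (Real.exp_le_exp.2 ?_) (phi_pos x).le
    have : b * s ≤ x * s := mul_le_mul_of_nonneg_right (le_of_lt hx) hs
    linarith

lemma le_Tail_shift {b s : ℝ} (hs : s ≤ 0) :
    Real.exp (-(b*s) - s^2/2) * Tail b ≤ Tail (b + s) := by
  rw [Tail_shift, Tail, ← integral_const_mul]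
  refine setIntegral_mono_on ?_ ?_ measurableSet_Ioi ?_
  · exact (phi_integrable.const_mul _).integrableOn
  · exact (phi_integrable.comp_add_right s).integrableOn
  · intro x hx
    rw [phi_shift, mul_comm]
    refine mul_le_mul_of_nonneg_left (Real.exp_le_exp.2 ?_) (phi_pos x).le
    have : x * s ≤ b * s := by nlinarith [le_of_lt (Set.mem_Ioi.1 hx)]
    linarith

lemma Tail_le_one (x : ℝ) : Tail x ≤ 1 := by
  have := Phi_add_Tail x; have := Phi_nonneg x; linarith

lemma bseq_tendsto : Tendsto (fun n : ℕ => PhiInv (1 - 1/(n:ℝ))) atTop atTop := by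
  rw [tendsto_atTop]
  intro M
  have h1 : Tendsto (fun n : ℕ => 1/(n:ℝ)) atTop (nhds 0) := by
    exact tendsto_one_div_atTop_nhds_zero_nat
  have h2 : ∀ᶠ n : ℕ in atTop, 1/(n:ℝ) < 1 - Phi M :=
    h1.eventually (eventually_lt_nhds (by linarith [Phi_lt_one M]))
  filter_upwards [h2, eventually_ge_atTop 2] with n hn hn2
  have hnpos : (0:ℝ) < (n:ℝ) := by positivity
  have hmem : 1 - 1/(n:ℝ) ∈ Set.Ioo (0:ℝ) 1 := by
    constructor
    · have : 1/(n:ℝ) ≤ 1/2 := by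
        apply one_div_le_one_div_of_le (by norm_num)
        exact_mod_cast hn2
      linarith
    · have : (0:ℝ) < 1/(n:ℝ) := by positivity
      linarith
  exact (lt_PhiInv hmem (by linarith)).le

lemma hTail_bseq : ∀ᶠ n : ℕ in atTop, Tail (PhiInv (1 - 1/(n:ℝ))) = 1/(n:ℝ) := by
  filter_upwards [eventually_ge_atTop 2] with n hn2
  have hnpos : (0:ℝ) < (n:ℝ) := by
    have : (2:ℝ) ≤ n := by exact_mod_cast hn2
    linarith
  have hmem : 1 - 1/(n:ℝ) ∈ Set.Ioo (0:ℝ) 1 := by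
    constructor
    · have : 1/(n:ℝ) ≤ 1/2 := by
        apply one_div_le_one_div_of_le (by norm_num)
        exact_mod_cast hn2
      linarith
    · have : (0:ℝ) < 1/(n:ℝ) := by positivity
      linarith
  have := Phi_add_Tail (PhiInv (1 - 1/(n:ℝ)))
  rw [Phi_PhiInv hmem] at this
  linarith

lemma lemA {s : ℝ} (hs : 0 < s) (n₀ : ℕ → ℕ) (hle : ∀ n, n₀ n ≤ n) :
    Tendsto (fun n : ℕ => Phi (PhiInv (1 - 1/(n:ℝ)) + s) ^ (n₀ n)) atTop (nhds 1) := by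
  set b : ℕ → ℝ := fun n => PhiInv (1 - 1/(n:ℝ)) with hb
  have hexp : Tendsto (fun n : ℕ => Real.exp (-(b n * s) - s^2/2)) atTop (nhds 0) := by
    apply Real.tendsto_exp_atBot.comp
    apply tendsto_atBot_add_const_right
    exact tendsto_neg_atTop_atBot.comp (bseq_tendsto.atTop_mul_const hs)
  have hlow : Tendsto (fun n : ℕ => 1 - Real.exp (-(b n * s) - s^2/2)) atTop (nhds 1) := by
    simpa using (tendsto_const_nhds (x := (1:ℝ)).sub hexp)
  refine tendsto_of_tendsto_of_tendsto_of_le_of_le' hlow tendsto_const_nhds ?_ ?_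
  · filter_upwards [hTail_bseq, eventually_ge_atTop 1] with n hT hn1
    have hnpos : (0:ℝ) < (n:ℝ) := by
      have : (1:ℝ) ≤ n := by exact_mod_cast hn1
      linarith
    have hT2 : Tail (b n + s) ≤ Real.exp (-(b n * s) - s^2/2) * (1/(n:ℝ)) := by
      rw [← hT]; exact Tail_shift_le hs.le
    have hPhiEq : Phi (b n + s) = 1 - Tail (b n + s) := by
      have := Phi_add_Tail (b n + s); linarith
    have hbern : 1 - (n₀ n : ℝ) * Tail (b n + s) ≤ Phi (b n + s) ^ (n₀ n) := by
      have h2 : (-2:ℝ) ≤ -Tail (b n + s) := by linarith [Tail_le_one (b n + s)]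
      have := one_add_mul_le_pow h2 (n₀ n)
      rw [show (1:ℝ) + -Tail (b n + s) = Phi (b n + s) by linarith] at this
      calc 1 - (n₀ n : ℝ) * Tail (b n + s) = 1 + (n₀ n : ℝ) * (-Tail (b n + s)) := by ring
        _ ≤ _ := this
    have hkn : (n₀ n : ℝ) * Tail (b n + s) ≤ Real.exp (-(b n * s) - s^2/2) := by
      have h1 : (n₀ n : ℝ) ≤ (n:ℝ) := by exact_mod_cast hle n
      have h3 : (n₀ n : ℝ) * Tail (b n + s) ≤ (n:ℝ) * (Real.exp (-(b n * s) - s^2/2) * (1/(n:ℝ))) := by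
        apply mul_le_mul h1 hT2 (Tail_nonneg _) hnpos.le
      have h4 : (n:ℝ) * (Real.exp (-(b n * s) - s^2/2) * (1/(n:ℝ)))
          = Real.exp (-(b n * s) - s^2/2) := by field_simp
      linarith
    linarith
  · filter_upwards with n
    exact pow_le_one₀ (Phi_nonneg _) (Phi_le_one _)

lemma lemB {s : ℝ} (hs : s < 0) (n₀ : ℕ → ℕ) {p₀ : ℝ} (hp₀ : 0 < p₀)
    (hconv : Tendsto (fun n : ℕ => (n₀ n : ℝ) / n) atTop (nhds p₀)) :
    Tendsto (fun n : ℕ => Phi (PhiInv (1 - 1/(n:ℝ)) + s) ^ (n₀ n)) atTop (nhds 0) := by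
  set b : ℕ → ℝ := fun n => PhiInv (1 - 1/(n:ℝ)) with hb
  have hE : Tendsto (fun n : ℕ => Real.exp (-(b n * s) - s^2/2)) atTop atTop := by
    apply Real.tendsto_exp_atTop.comp
    apply tendsto_atTop_add_const_right
    exact tendsto_neg_atBot_atTop.comp (bseq_tendsto.atTop_mul_const_of_neg hs)
  have hprod : Tendsto (fun n : ℕ => (n₀ n : ℝ) * Tail (b n + s)) atTop atTop := by
    have hhalf : ∀ᶠ n : ℕ in atTop, p₀/2 ≤ (n₀ n : ℝ) / n :=
      hconv.eventually (eventually_ge_nhds (by linarith))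
    have hmain : Tendsto (fun n : ℕ => (p₀/2) * Real.exp (-(b n * s) - s^2/2)) atTop atTop :=
      hE.const_mul_atTop (by linarith)
    apply tendsto_atTop_mono' _ _ hmain
    filter_upwards [hhalf, hTail_bseq, eventually_ge_atTop 1] with n hh hT hn1
    have hnpos : (0:ℝ) < (n:ℝ) := by
      have : (1:ℝ) ≤ n := by exact_mod_cast hn1
      linarith
    have hT2 : Real.exp (-(b n * s) - s^2/2) * (1/(n:ℝ)) ≤ Tail (b n + s) := by
      rw [← hT]; exact le_Tail_shift hs.le
    have hk : p₀/2 * (n:ℝ) ≤ (n₀ n : ℝ) := by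
      rw [div_le_div_iff₀ (by norm_num) hnpos] at hh
      nlinarith
    calc (p₀/2) * Real.exp (-(b n * s) - s^2/2)
        = (p₀/2 * (n:ℝ)) * (Real.exp (-(b n * s) - s^2/2) * (1/(n:ℝ))) := by
          field_simp
      _ ≤ (n₀ n : ℝ) * Tail (b n + s) := by
          apply mul_le_mul hk hT2 (by positivity) (le_trans (by positivity) hk)
  have hupper : Tendsto (fun n : ℕ => Real.exp (-((n₀ n : ℝ) * Tail (b n + s)))) atTop (nhds 0) :=
    Real.tendsto_exp_atBot.comp (tendsto_neg_atTop_atBot.comp hprod)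
  refine tendsto_of_tendsto_of_tendsto_of_le_of_le' tendsto_const_nhds hupper ?_ ?_
  · filter_upwards with n; exact pow_nonneg (Phi_nonneg _) _
  · filter_upwards with n
    have h1 : Phi (b n + s) ≤ Real.exp (-(Tail (b n + s))) := by
      have := Real.add_one_le_exp (-(Tail (b n + s)))
      have := Phi_add_Tail (b n + s)
      linarith
    calc Phi (b n + s) ^ (n₀ n) ≤ Real.exp (-(Tail (b n + s))) ^ (n₀ n) :=
          pow_le_pow_left₀ (Phi_nonneg _) h1 _
      _ = Real.exp (-((n₀ n : ℝ) * Tail (b n + s))) := by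
          rw [← Real.exp_nat_mul]; ring_nf

noncomputable def cutoff (n : ℕ) (α ρ : ℝ) : ℝ :=
  Real.sqrt (1 - ρ) * PhiInv (1 - 1 / n) - Real.sqrt ρ * PhiInv α

lemma gauss_singleton (c : ℝ) : gaussianReal 0 1 {c} = 0 :=
  gaussianReal_absolutelyContinuous 0 one_ne_zero Real.volume_singleton

lemma gauss_Ioi (c : ℝ) : gaussianReal 0 1 (Set.Ioi c) = ENNReal.ofReal (Tail c) := by
  rw [gaussianReal_apply_eq_integral 0 one_ne_zero, Tail, phi_eq]

theorem stmt5 (α ρ : ℝ) (hα : α ∈ Set.Ioo (0 : ℝ) 1) (hρ : ρ ∈ Set.Ioo (0 : ℝ) 1)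
    (n₀ : ℕ → ℕ) (hle : ∀ n, n₀ n ≤ n) (p₀ : ℝ) (hp₀ : 0 < p₀)
    (hconv : Tendsto (fun n : ℕ => (n₀ n : ℝ) / n) atTop (nhds p₀)) :
    Tendsto (fun n : ℕ =>
        1 - ∫ z, (Phi ((cutoff n α ρ + Real.sqrt ρ * z) / Real.sqrt (1 - ρ))) ^ (n₀ n)
            ∂(gaussianReal 0 1))
      atTop (nhds α) := by
  obtain ⟨hα0, hα1⟩ := hα
  obtain ⟨hρ0, hρ1⟩ := hρ
  have h1ρ : (0:ℝ) < 1 - ρ := by linarith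
  have hsq : (0:ℝ) < Real.sqrt (1 - ρ) := Real.sqrt_pos.2 h1ρ
  have hsqρ : (0:ℝ) < Real.sqrt ρ := Real.sqrt_pos.2 hρ0
  set c₀ := PhiInv α with hc₀
  have hPhic₀ : Phi c₀ = α := Phi_PhiInv ⟨hα0, hα1⟩
  set μ := gaussianReal 0 1 with hμ
  set f : ℝ → ℝ := Set.indicator (Set.Ioi c₀) 1 with hf
  have harg : ∀ (n : ℕ) (z : ℝ), (cutoff n α ρ + Real.sqrt ρ * z) / Real.sqrt (1 - ρ)
      = PhiInv (1 - 1/(n:ℝ)) + Real.sqrt ρ * (z - c₀) / Real.sqrt (1 - ρ) := by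
    intro n z
    rw [cutoff, hc₀]
    field_simp
    ring
  have hInt : Tendsto (fun n : ℕ => ∫ z,
      Phi ((cutoff n α ρ + Real.sqrt ρ * z) / Real.sqrt (1 - ρ)) ^ (n₀ n) ∂μ)
      atTop (nhds (∫ z, f z ∂μ)) := by
    apply tendsto_integral_of_dominated_convergence (fun _ => (1:ℝ))
    · intro n
      apply Continuous.aestronglyMeasurable
      exact (Phi_continuous.comp (by continuity)).pow _
    · exact integrable_const 1
    · intro n
      filter_upwards with z
      rw [Real.norm_eq_abs, abs_of_nonneg (pow_nonneg (Phi_nonneg _) _)]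
      exact pow_le_one₀ (Phi_nonneg _) (Phi_le_one _)
    · have hz : ∀ᵐ z ∂μ, z ≠ c₀ := by
        rw [ae_iff]
        have he : {z : ℝ | ¬ z ≠ c₀} = {c₀} := by ext z; simp
        rw [he, hμ]
        exact gauss_singleton c₀
      filter_upwards [hz] with z hzne
      by_cases hzc : c₀ < z
      · have hfz : f z = 1 := by
          rw [hf, Set.indicator_of_mem (Set.mem_Ioi.2 hzc)]; rfl
        rw [hfz]
        have hspos : 0 < Real.sqrt ρ * (z - c₀) / Real.sqrt (1 - ρ) :=
          div_pos (mul_pos hsqρ (sub_pos.2 hzc)) hsq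
        simp_rw [harg]
        exact lemA hspos n₀ hle
      · have hlt : z < c₀ := lt_of_le_of_ne (le_of_not_gt hzc) hzne
        have hfz : f z = 0 := by
          rw [hf, Set.indicator_of_notMem (by simpa using hzc)]
        rw [hfz]
        have hsneg : Real.sqrt ρ * (z - c₀) / Real.sqrt (1 - ρ) < 0 :=
          div_neg_of_neg_of_pos (mul_neg_of_pos_of_neg hsqρ (sub_neg.2 hlt)) hsq
        simp_rw [harg]
        exact lemB hsneg n₀ hp₀ hconv
  have hfval : ∫ z, f z ∂μ = 1 - α := by
    rw [hf, integral_indicator_one measurableSet_Ioi, hμ, measureReal_def, gauss_Ioi,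
      ENNReal.toReal_ofReal (Tail_nonneg c₀)]
    have := Phi_add_Tail c₀
    rw [hPhic₀] at this
    linarith
  rw [hfval] at hInt
  have hfin := (tendsto_const_nhds (x := (1:ℝ)) (f := atTop (α := ℕ))).sub hInt
  have h1 : 1 - (1 - α) = α := by ring
  rw [h1] at hfin
  exact hfin
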